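/- Let 1 ≤ k₋ < k₊ and n ≥ 1 be integers. If there exists a positive integer d dividing (k₊+k₋)n+1 such that no prime p ≤ k₊ divides d, but (k₊+k₋)·d does not divide (k₊+k₋)n+1−d, then there is no splitting ℤ_{(k₊+k₋)n+1} = (M,S) with multiplier set M = [-k₋,k₊]* = {m ∈ ℤ : -k₋ ≤ m ≤ k₊, m ≠ 0} and |S| = n. (Equivalently, the (k₊,k₋,n)-quasi-cross does not lattice tile ℝⁿ.) -/

import Mathlib

/-!
Reduce modulo `d`. Every multiplier `m` with `|m| ≤ k₊` is invertible mod `d`, so `m·s ≡ 0 (mod d)`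
exactly when `s ≡ 0 (mod d)`. Hence the products `m·s` with `s ∈ S ∩ dℤ_q` are exactly the
`q/d - 1` nonzero multiples of `d` in `ℤ_q`, each hit once: `(k₊ + k₋)·|S ∩ dℤ_q| = q/d - 1`,
so `(k₊ + k₋)·d` divides `q - d`.
-/

/-- `(M, S)` is a splitting of `ℤ_q`: `M ⊆ ℤ \ {0}`, and the products `m·s`
(for `m ∈ M`, `s ∈ S`) are pairwise distinct and cover exactly the nonzero
elements of `ZMod q`. -/
def IsSplitting (q : ℕ) (M : Finset ℤ) (S : Finset (ZMod q)) : Prop :=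
  (0 : ℤ) ∉ M ∧
  Set.InjOn (fun p : ℤ × ZMod q => (p.1 : ZMod q) * p.2) ↑(M ×ˢ S) ∧
  (fun p : ℤ × ZMod q => (p.1 : ZMod q) * p.2) '' ↑(M ×ˢ S) = {a : ZMod q | a ≠ 0}

open Finset

lemma ZMod.card_filter_castHom_eq_zero_mul {q d : ℕ} [NeZero q] (hdvd : d ∣ q) :
    #{a : ZMod q | ZMod.castHom hdvd (ZMod d) a = 0} * d = q := by
  have : NeZero d := ⟨by rintro rfl; exact NeZero.ne q (Nat.eq_zero_of_zero_dvd hdvd)⟩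
  set f := (ZMod.castHom hdvd (ZMod d)).toAddMonoidHom
  have hrange : f.range = ⊤ := AddMonoidHom.range_eq_top.mpr (ZMod.castHom_surjective hdvd)
  have hcard := f.ker.card_mul_index
  rw [AddSubgroup.index_ker, hrange, AddSubgroup.card_top, Nat.card_zmod, Nat.card_zmod,
    Nat.card_eq_fintype_card, Fintype.card_subtype] at hcard
  convert hcard using 4
  exact Iff.rfl

lemma ZMod.isUnit_intCast_of_forall_prime_le_not_dvd {d k : ℕ} {m : ℤ} (hm0 : m ≠ 0)
    (hmk : m.natAbs ≤ k) (hd : ∀ p, p.Prime → p ≤ k → ¬ p ∣ d) : IsUnit (m : ZMod d) := by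
  have hcop : m.natAbs.Coprime d := Nat.coprime_of_dvd fun p hp hpm =>
    hd p hp ((Nat.le_of_dvd (Int.natAbs_pos.mpr hm0) hpm).trans hmk)
  have hunit := (ZMod.isUnit_iff_coprime _ _).mpr hcop
  rcases Int.natAbs_eq m with h | h <;> rw [h] <;> simpa using hunit

lemma Int.card_Icc_neg_erase_zero (a b : ℕ) : #((Icc (-(a : ℤ)) b).erase 0) = b + a := by
  rw [card_erase_of_mem (by simp), Int.card_Icc]
  omega

namespace IsSplitting

variable {q : ℕ} [NeZero q] {M : Finset ℤ} {S : Finset (ZMod q)}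

theorem card_mul_card_filter_add_one (h : IsSplitting q M S) {R : Type*} [Ring R]
    [DecidableEq R] (φ : ZMod q →+* R) (hM : ∀ m ∈ M, IsUnit (m : R)) :
    #M * #{s ∈ S | φ s = 0} + 1 = #{a : ZMod q | φ a = 0} := by
  obtain ⟨-, hinj, himg⟩ := h
  set T := {s ∈ S | φ s = 0}
  have hTS : M ×ˢ T ⊆ M ×ˢ S := product_subset_product_right (filter_subset _ _)
  have himgT : (M ×ˢ T).image (fun p : ℤ × ZMod q => (p.1 : ZMod q) * p.2)
      = ({a | φ a = 0} : Finset (ZMod q)).erase 0 := by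
    ext a
    simp only [mem_image, mem_erase, mem_filter, mem_univ, true_and, mem_product, T]
    constructor
    · rintro ⟨⟨m, s⟩, ⟨hm, hs, hφs⟩, rfl⟩
      exact ⟨himg.subset ⟨(m, s), by simpa using ⟨hm, hs⟩, rfl⟩, by simp [hφs]⟩
    · rintro ⟨ha0, hφa⟩
      obtain ⟨⟨m, s⟩, hms, rfl⟩ := himg.symm.subset ha0
      simp only [coe_product, Set.mem_prod, mem_coe] at hms
      have hφs : φ s = 0 := by
        rw [map_mul, map_intCast] at hφa
        exact (hM m hms.1).mul_right_eq_zero.mp hφa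
      exact ⟨(m, s), ⟨hms.1, hms.2, hφs⟩, rfl⟩
  rw [← card_product, ← card_image_of_injOn (hinj.mono (by exact_mod_cast hTS)), himgT,
    card_erase_add_one (by simp)]

theorem mul_dvd_sub (h : IsSplitting q M S) {d : ℕ} (hdvd : d ∣ q)
    (hM : ∀ m ∈ M, IsUnit (m : ZMod d)) : #M * d ∣ q - d := by
  have hcount := h.card_mul_card_filter_add_one (ZMod.castHom hdvd (ZMod d)) hM
  set t := #{s ∈ S | ZMod.castHom hdvd (ZMod d) s = 0}
  have hq : q = (#M * t + 1) * d := by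
    rw [hcount]
    exact (ZMod.card_filter_castHom_eq_zero_mul hdvd).symm
  have hqd : q - d = #M * t * d := by rw [hq, Nat.add_one_mul, Nat.add_sub_cancel]
  exact ⟨t, by rw [hqd]; ring⟩

end IsSplitting

theorem stmt_15_general (kp km n : ℕ) (hk : km < kp)
    (d : ℕ) (hdvd : d ∣ (kp + km) * n + 1)
    (hcop : ∀ p : ℕ, Nat.Prime p → p ≤ kp → ¬ p ∣ d)
    (hndvd : ¬ (kp + km) * d ∣ (kp + km) * n + 1 - d) :
    ¬ ∃ S : Finset (ZMod ((kp + km) * n + 1)),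
        IsSplitting ((kp + km) * n + 1)
          ((Finset.Icc (-(km : ℤ)) (kp : ℤ)).erase 0) S ∧ S.card = n := by
  rintro ⟨S, hS, -⟩
  have hunit : ∀ m ∈ (Icc (-(km : ℤ)) kp).erase 0, IsUnit (m : ZMod d) := by
    intro m hm
    simp only [mem_erase, mem_Icc] at hm
    exact ZMod.isUnit_intCast_of_forall_prime_le_not_dvd hm.1 (by omega) hcop
  have hdiv := hS.mul_dvd_sub hdvd hunit
  rw [Int.card_Icc_neg_erase_zero] at hdiv
  exact hndvd hdiv

theorem stmt_15 (kp km n : ℕ) (hkm : 1 ≤ km) (hk : km < kp) (hn : 1 ≤ n)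
    (d : ℕ) (hd : 0 < d) (hdvd : d ∣ (kp + km) * n + 1)
    (hcop : ∀ p : ℕ, Nat.Prime p → p ≤ kp → ¬ p ∣ d)
    (hndvd : ¬ (kp + km) * d ∣ (kp + km) * n + 1 - d) :
    ¬ ∃ S : Finset (ZMod ((kp + km) * n + 1)),
        IsSplitting ((kp + km) * n + 1)
          ((Finset.Icc (-(km : ℤ)) (kp : ℤ)).erase 0) S ∧ S.card = n :=
  stmt_15_general kp km n hk d hdvd hcop hndvd
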